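/- Let γ ∈ ℝ^d with |γ| = 1, k ∈ ℝ, Ψ := I − 2γγᵀ, and θ(x) := Ψx + 2kγ. Let A : ℝ^d → (d×d symmetric positive-definite matrices) and b : ℝ^d → ℝ^d satisfy A(x) = Ψ A(θ(x)) Ψ and b(x) = Ψ b(θ(x)) for all x ∈ ℝ^d. Define p^{A,b}_t(x,y) := (2π)^{−d/2} (det(A(y)·t))^{−1/2} exp(−(1/(2t)) ⟨A(y)^{−1}(x − y − b(y)t), x − y − b(y)t⟩). Then for every t > 0, every x ∈ ℝ^d with ⟨x, γ⟩ = k, and every y ∈ ℝ^d, one has p^{A,b}_t(x, θ(y)) = p^{A,b}_t(x, y). -/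

import Mathlib

open Matrix

/-- The reflection matrix `Ψ := I − 2 γγᵀ`. -/
noncomputable def PsiMat {d : ℕ} (γ : Fin d → ℝ) : Matrix (Fin d) (Fin d) ℝ :=
  1 - (2:ℝ) • Matrix.vecMulVec γ γ

/-- The affine reflection `θ(x) := Ψx + 2kγ` across the hyperplane `{⟨x,γ⟩ = k}`. -/
noncomputable def reflMap {d : ℕ} (γ : Fin d → ℝ) (k : ℝ) (x : Fin d → ℝ) : Fin d → ℝ :=
  (PsiMat γ).mulVec x + (2 * k) • γ

/-- The Gaussian (Euler–Maruyama) kernel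
`p^{A,b}_t(x,y) := (2π)^{−d/2} (det(A(y)t))^{−1/2}
  exp(−(1/(2t)) ⟨A(y)⁻¹(x−y−b(y)t), x−y−b(y)t⟩)`. -/
noncomputable def pAb {d : ℕ} (A : (Fin d → ℝ) → Matrix (Fin d) (Fin d) ℝ)
    (b : (Fin d → ℝ) → (Fin d → ℝ)) (t : ℝ) (x y : Fin d → ℝ) : ℝ :=
  (2 * Real.pi) ^ (-(d : ℝ) / 2) * ((t • A y).det) ^ (-(1:ℝ) / 2)
    * Real.exp (-(1 / (2 * t))
        * ((A y)⁻¹.mulVec (x - y - t • b y) ⬝ᵥ (x - y - t • b y)))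

/-!
Ψ is a symmetric involution with Ψγ = -γ, so θ is an involution and, for `x` on the hyperplane,
Ψ(x - θy) = x - y. Together with the symmetry of `b` this gives
Ψ(x - θy - t b(θy)) = x - y - t b(y), while A(θy) = Ψ A(y) Ψ. Conjugating by an involution
leaves the determinant unchanged, and since Ψ is symmetric it carries the quadratic form of
A(θy)⁻¹ at x - θy - t b(θy) to that of A(y)⁻¹ at x - y - t b(y).
-/

namespace Matrix

variable {n R : Type*} [Fintype n]

theorem transpose_mul_mul_mulVec_dotProduct [CommSemiring R] (P N : Matrix n n R) (v : n → R) :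
    (Pᵀ * N * P) *ᵥ v ⬝ᵥ v = N *ᵥ (P *ᵥ v) ⬝ᵥ P *ᵥ v := by
  rw [← mulVec_mulVec, ← mulVec_mulVec, mulVec_transpose, ← dotProduct_mulVec]

variable [DecidableEq n] [CommRing R]

theorem det_mul_mul_of_mul_self_eq_one {Ψ : Matrix n n R} (hΨ : Ψ * Ψ = 1) (M : Matrix n n R) :
    (Ψ * M * Ψ).det = M.det := by
  rw [det_mul, det_mul, mul_right_comm, ← det_mul, hΨ, det_one, one_mul]

theorem inv_mul_mul_of_mul_self_eq_one {Ψ : Matrix n n R} (hΨ : Ψ * Ψ = 1) (M : Matrix n n R) :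
    (Ψ * M * Ψ)⁻¹ = Ψ * M⁻¹ * Ψ := by
  rw [mul_inv_rev, mul_inv_rev, inv_eq_left_inv hΨ, Matrix.mul_assoc]

end Matrix

open Matrix

theorem pAb_eq_of_conj {d : ℕ} {A : (Fin d → ℝ) → Matrix (Fin d) (Fin d) ℝ}
    {b : (Fin d → ℝ) → (Fin d → ℝ)} {t : ℝ} {x y z : Fin d → ℝ} {Ψ : Matrix (Fin d) (Fin d) ℝ}
    (hΨt : Ψᵀ = Ψ) (hΨ : Ψ * Ψ = 1) (hA : A z = Ψ * A y * Ψ)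
    (hv : Ψ *ᵥ (x - z - t • b z) = x - y - t • b y) :
    pAb A b t x z = pAb A b t x y := by
  have hdet : (t • A z).det = (t • A y).det := by
    rw [hA, ← Matrix.smul_mul, ← Matrix.mul_smul, det_mul_mul_of_mul_self_eq_one hΨ]
  have hquad : (A z)⁻¹ *ᵥ (x - z - t • b z) ⬝ᵥ (x - z - t • b z)
      = (A y)⁻¹ *ᵥ (x - y - t • b y) ⬝ᵥ (x - y - t • b y) := by
    rw [hA, inv_mul_mul_of_mul_self_eq_one hΨ]
    nth_rw 1 [← hΨt]
    rw [transpose_mul_mul_mulVec_dotProduct, hv]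
  rw [pAb, pAb, hdet, hquad]

section Reflection

variable {d : ℕ} {γ : Fin d → ℝ}

theorem PsiMat_transpose (γ : Fin d → ℝ) : (PsiMat γ)ᵀ = PsiMat γ := by
  simp [PsiMat, transpose_vecMulVec]

theorem PsiMat_mulVec (γ v : Fin d → ℝ) : PsiMat γ *ᵥ v = v - (2 * (γ ⬝ᵥ v)) • γ := by
  rw [PsiMat, sub_mulVec, smul_mulVec, vecMulVec_mulVec, one_mulVec, op_smul_eq_smul, smul_smul]

theorem PsiMat_mulVec_self (hγ : γ ⬝ᵥ γ = 1) : PsiMat γ *ᵥ γ = -γ := by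
  rw [PsiMat_mulVec, hγ]
  module

theorem PsiMat_mul_self (hγ : γ ⬝ᵥ γ = 1) : PsiMat γ * PsiMat γ = 1 := by
  refine ext_iff_mulVec.2 fun v ↦ ?_
  rw [← mulVec_mulVec, one_mulVec, PsiMat_mulVec γ v, mulVec_sub, mulVec_smul,
    PsiMat_mulVec_self hγ, PsiMat_mulVec]
  module

theorem reflMap_reflMap (hγ : γ ⬝ᵥ γ = 1) (k : ℝ) (y : Fin d → ℝ) :
    reflMap γ k (reflMap γ k y) = y := by
  rw [reflMap, reflMap, mulVec_add, mulVec_mulVec, PsiMat_mul_self hγ, one_mulVec, mulVec_smul,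
    PsiMat_mulVec_self hγ]
  module

theorem PsiMat_mulVec_sub_reflMap (hγ : γ ⬝ᵥ γ = 1) {k : ℝ} {x : Fin d → ℝ} (hx : x ⬝ᵥ γ = k)
    (y : Fin d → ℝ) : PsiMat γ *ᵥ (x - reflMap γ k y) = x - y := by
  rw [mulVec_sub, PsiMat_mulVec, dotProduct_comm, hx, reflMap, mulVec_add, mulVec_mulVec,
    PsiMat_mul_self hγ, one_mulVec, mulVec_smul, PsiMat_mulVec_self hγ]
  module

end Reflection

theorem stmt_7_general (d : ℕ) (γ : Fin d → ℝ) (hγ : γ ⬝ᵥ γ = 1) (k : ℝ)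
    (A : (Fin d → ℝ) → Matrix (Fin d) (Fin d) ℝ) (b : (Fin d → ℝ) → (Fin d → ℝ))
    (hA : ∀ x, A x = PsiMat γ * A (reflMap γ k x) * PsiMat γ)
    (hb : ∀ x, b x = (PsiMat γ).mulVec (b (reflMap γ k x))) :
    ∀ t > (0:ℝ), ∀ x : Fin d → ℝ, x ⬝ᵥ γ = k → ∀ y : Fin d → ℝ,
      pAb A b t x (reflMap γ k y) = pAb A b t x y := by
  intro t _ x hx y
  have hθθ := reflMap_reflMap hγ k y
  refine pAb_eq_of_conj (PsiMat_transpose γ) (PsiMat_mul_self hγ) ?_ ?_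
  · simpa only [hθθ] using hA (reflMap γ k y)
  · have hbθ : b (reflMap γ k y) = PsiMat γ *ᵥ b y := by
      simpa only [hθθ] using hb (reflMap γ k y)
    rw [mulVec_sub, PsiMat_mulVec_sub_reflMap hγ hx, hbθ, mulVec_smul, mulVec_mulVec,
      PsiMat_mul_self hγ, one_mulVec]

/-- If `A` and `b` are symmetric under the reflection `θ`, i.e.
`A(x) = Ψ A(θ(x)) Ψ` and `b(x) = Ψ b(θ(x))`, then for every `t > 0`, every `x` in the
hyperplane `⟨x,γ⟩ = k` and every `y`, `p^{A,b}_t(x, θ(y)) = p^{A,b}_t(x, y)`. -/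
theorem stmt_7 (d : ℕ) (γ : Fin d → ℝ) (hγ : γ ⬝ᵥ γ = 1) (k : ℝ)
    (A : (Fin d → ℝ) → Matrix (Fin d) (Fin d) ℝ) (b : (Fin d → ℝ) → (Fin d → ℝ))
    (hAsymm : ∀ x, (A x).IsSymm) (hApos : ∀ x, (A x).PosDef)
    (hA : ∀ x, A x = PsiMat γ * A (reflMap γ k x) * PsiMat γ)
    (hb : ∀ x, b x = (PsiMat γ).mulVec (b (reflMap γ k x))) :
    ∀ t > (0:ℝ), ∀ x : Fin d → ℝ, x ⬝ᵥ γ = k → ∀ y : Fin d → ℝ,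
      pAb A b t x (reflMap γ k y) = pAb A b t x y :=
  stmt_7_general d γ hγ k A b hA hb
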